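/- arXiv:1509.05890 — 2 statements merged into one kernel-verified Lean document; each statement's English description precedes it below -/
import Mathlib

section
/- Let η : ℝ⁵ → ℝ⁵ → ℝ be the bilinear form with signature (-,+,+,+,+). Fix a nonzero null vector ℓ (η(ℓ,ℓ) = 0) and a scalar field φ(x) = (η(x,ℓ))^{-w} defined on the region η(x,ℓ) > 0 of the hyperboloid {x : η(x,x) = 1}. Then φ satisfies (□ − m²)φ = 0 on de Sitter space, where □ is the Laplace–Beltrami operator of the induced metric, if and only if w(w−3) = −m², i.e. w = 3/2 ± √(9/4 − m²). -/
namespace Stmt7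

/-- The Minkowski bilinear form of signature `(-,+,+,+,+)` on `ℝ⁵`. -/
noncomputable def eta (x y : Fin 5 → ℝ) : ℝ :=
  ∑ i : Fin 5, (if i = (0 : Fin 5) then (-1 : ℝ) else 1) * x i * y i

/-- The flat wave operator `□ = η^{μν} ∂_μ ∂_ν` on `ℝ^{1,4}`. -/
noncomputable def flatBox (f : (Fin 5 → ℝ) → ℝ) (x : Fin 5 → ℝ) : ℝ :=
  ∑ i : Fin 5, (if i = (0 : Fin 5) then (-1 : ℝ) else 1) *
    fderiv ℝ (fun y => fderiv ℝ f y (Pi.single i 1)) x (Pi.single i 1)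

/-- The Laplace–Beltrami operator of the induced metric on the de Sitter
hyperboloid `{x : η(x,x) = 1}`: apply the flat wave operator to the
degree-zero homogeneous extension `y ↦ f(y/√(η(y,y)))`. -/
noncomputable def dsBox (f : (Fin 5 → ℝ) → ℝ) (x : Fin 5 → ℝ) : ℝ :=
  flatBox (fun y => f ((Real.sqrt (eta y y))⁻¹ • y)) x

/-! On the cone `η(y,y) > 0, η(y,ℓ) > 0` the degree-zero extension of `φ = η(·,ℓ)^{-w}` is
`Q^{w/2} L^{-w}` with `Q = η(y,y)`, `L = η(y,ℓ)`. Two applications of the product rule give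
`□(Q^p L^r) = 2p(2p+3+2r) Q^{p-1} L^r + r(r-1) η(ℓ,ℓ) Q^p L^{r-2}` (the `3` is `5 - 2`, with
`5 = ∑ η_ii²` the dimension), so on the hyperboloid and for null `ℓ` one gets
`□φ = w(3-w) φ`. Since `φ > 0`, the wave equation holds iff `w(w-3) = -m²`; deriving the
latter from the former needs one point of the region, e.g. the normalized spatial part of `ℓ`.
The rest is the quadratic formula. -/

noncomputable def etaSign (i : Fin 5) : ℝ := if i = 0 then -1 else 1

lemma etaSign_mul_self (i : Fin 5) : etaSign i * etaSign i = 1 := by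
  unfold etaSign; split_ifs <;> norm_num

lemma eta_eq_sum (x y : Fin 5 → ℝ) : eta x y = ∑ i, etaSign i * x i * y i := rfl

lemma flatBox_eq_sum (f : (Fin 5 → ℝ) → ℝ) (x : Fin 5 → ℝ) :
    flatBox f x = ∑ i, etaSign i *
      fderiv ℝ (fun y => fderiv ℝ f y (Pi.single i 1)) x (Pi.single i 1) := rfl

lemma eta_smul_left (c : ℝ) (x y : Fin 5 → ℝ) : eta (c • x) y = c * eta x y := by
  simp only [eta_eq_sum, Finset.mul_sum, Pi.smul_apply, smul_eq_mul]
  exact Finset.sum_congr rfl fun i _ => by ring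

noncomputable def etaCLM (v : Fin 5 → ℝ) : (Fin 5 → ℝ) →L[ℝ] ℝ :=
  ∑ i, (etaSign i * v i) • ContinuousLinearMap.proj i

lemma etaCLM_apply (v z : Fin 5 → ℝ) : etaCLM v z = eta z v := by
  simp only [etaCLM, eta_eq_sum, FunLike.coe_sum, Finset.sum_apply,
    FunLike.coe_smul, Pi.smul_apply, ContinuousLinearMap.proj_apply, smul_eq_mul]
  exact Finset.sum_congr rfl fun i _ => by ring

lemma etaCLM_single (v : Fin 5 → ℝ) (i : Fin 5) :
    etaCLM v (Pi.single i 1) = etaSign i * v i := by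
  simp [etaCLM_apply, eta_eq_sum, Pi.single_apply]

lemma hasFDerivAt_eta_left (v y : Fin 5 → ℝ) :
    HasFDerivAt (fun z => eta z v) (etaCLM v) y := by
  convert (etaCLM v).hasFDerivAt (x := y) using 1
  exact funext fun z => (etaCLM_apply v z).symm

lemma hasFDerivAt_eta_self (y : Fin 5 → ℝ) :
    HasFDerivAt (fun z => eta z z) ((2 : ℝ) • etaCLM y) y := by
  have hproj (i : Fin 5) :=
    (ContinuousLinearMap.proj (R := ℝ) (φ := fun _ : Fin 5 => ℝ) i).hasFDerivAt (x := y)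
  have h := HasFDerivAt.fun_sum (u := Finset.univ) fun i _ =>
    ((hproj i).const_mul (etaSign i)).mul (hproj i)
  refine h.congr_fderiv (ContinuousLinearMap.ext fun v => ?_)
  simp [etaCLM_apply, eta_eq_sum, Finset.mul_sum]
  exact Finset.sum_congr rfl fun i _ => by ring

def posRegion (ℓ : Fin 5 → ℝ) : Set (Fin 5 → ℝ) := {y | 0 < eta y y ∧ 0 < eta y ℓ}

lemma isOpen_posRegion (ℓ : Fin 5 → ℝ) : IsOpen (posRegion ℓ) := by
  have hQ : Continuous fun y : Fin 5 → ℝ => eta y y := by unfold eta; fun_prop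
  have hL : Continuous fun y : Fin 5 → ℝ => eta y ℓ := by unfold eta; fun_prop
  exact (isOpen_lt continuous_const hQ).inter (isOpen_lt continuous_const hL)

noncomputable def etaPow (ℓ : Fin 5 → ℝ) (p r : ℝ) (y : Fin 5 → ℝ) : ℝ :=
  eta y y ^ p * eta y ℓ ^ r

section etaPow

variable {ℓ y : Fin 5 → ℝ} (p r : ℝ)

lemma hasFDerivAt_etaPow (hy : y ∈ posRegion ℓ) :
    HasFDerivAt (etaPow ℓ p r)
      ((2 * p * etaPow ℓ (p - 1) r y) • etaCLM y + (r * etaPow ℓ p (r - 1) y) • etaCLM ℓ) y := by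
  have h := ((hasFDerivAt_eta_self y).rpow_const (p := p) (Or.inl hy.1.ne')).mul
    ((hasFDerivAt_eta_left ℓ y).rpow_const (p := r) (Or.inl hy.2.ne'))
  refine h.congr_fderiv (ContinuousLinearMap.ext fun v => ?_)
  simp only [etaPow, add_apply, smul_apply, smul_eq_mul]
  ring

lemma fderiv_etaPow_single (hy : y ∈ posRegion ℓ) (i : Fin 5) :
    fderiv ℝ (etaPow ℓ p r) y (Pi.single i 1)
      = etaSign i * (2 * p * y i * etaPow ℓ (p - 1) r y + r * ℓ i * etaPow ℓ p (r - 1) y) := by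
  rw [(hasFDerivAt_etaPow p r hy).fderiv]
  simp only [add_apply, smul_apply, etaCLM_single, smul_eq_mul]
  ring

lemma fderiv_fderiv_etaPow_single (hy : y ∈ posRegion ℓ) (i : Fin 5) :
    fderiv ℝ (fun z => fderiv ℝ (etaPow ℓ p r) z (Pi.single i 1)) y (Pi.single i 1)
      = etaSign i * (2 * p * etaPow ℓ (p - 1) r y)
        + 4 * p * (p - 1) * y i ^ 2 * etaPow ℓ (p - 2) r y
        + 4 * p * r * y i * ℓ i * etaPow ℓ (p - 1) (r - 1) y
        + r * (r - 1) * ℓ i ^ 2 * etaPow ℓ p (r - 2) y := by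
  have hfirst : (fun z => fderiv ℝ (etaPow ℓ p r) z (Pi.single i 1)) =ᶠ[nhds y]
      fun z => etaSign i * (2 * p * z i * etaPow ℓ (p - 1) r z + r * ℓ i * etaPow ℓ p (r - 1) z) :=
    Filter.eventually_of_mem ((isOpen_posRegion ℓ).mem_nhds hy) fun z hz =>
      fderiv_etaPow_single p r hz i
  have hproj :=
    (ContinuousLinearMap.proj (R := ℝ) (φ := fun _ : Fin 5 => ℝ) i).hasFDerivAt (x := y)
  have h : HasFDerivAt (fun z => etaSign i *
      (2 * p * z i * etaPow ℓ (p - 1) r z + r * ℓ i * etaPow ℓ p (r - 1) z)) _ y :=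
    (((hproj.const_mul (2 * p)).mul (hasFDerivAt_etaPow (p - 1) r hy)).add
      ((hasFDerivAt_etaPow p (r - 1) hy).const_mul (r * ℓ i))).const_mul (etaSign i)
  rw [hfirst.fderiv_eq, h.fderiv]
  simp only [add_apply, smul_apply, etaCLM_single, smul_eq_mul, ContinuousLinearMap.proj_apply,
    Pi.single_eq_same, sub_sub, one_add_one_eq_two]
  linear_combination (4 * p * (p - 1) * y i ^ 2 * etaPow ℓ (p - 2) r y
    + 4 * p * r * y i * ℓ i * etaPow ℓ (p - 1) (r - 1) y
    + r * (r - 1) * ℓ i ^ 2 * etaPow ℓ p (r - 2) y) * etaSign_mul_self i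

lemma etaPow_add_one_left (hy : y ∈ posRegion ℓ) :
    etaPow ℓ (p + 1) r y = eta y y * etaPow ℓ p r y := by
  rw [etaPow, etaPow, Real.rpow_add_one hy.1.ne']; ring

lemma etaPow_add_one_right (hy : y ∈ posRegion ℓ) :
    etaPow ℓ p (r + 1) y = eta y ℓ * etaPow ℓ p r y := by
  rw [etaPow, etaPow, Real.rpow_add_one hy.2.ne']; ring

lemma flatBox_etaPow (hy : y ∈ posRegion ℓ) :
    flatBox (etaPow ℓ p r) y = 2 * p * (2 * p + 3 + 2 * r) * etaPow ℓ (p - 1) r y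
      + r * (r - 1) * eta ℓ ℓ * etaPow ℓ p (r - 2) y := by
  have hterm (i : Fin 5) : etaSign i *
      fderiv ℝ (fun z => fderiv ℝ (etaPow ℓ p r) z (Pi.single i 1)) y (Pi.single i 1)
      = 2 * p * etaPow ℓ (p - 1) r y
        + 4 * p * (p - 1) * etaPow ℓ (p - 2) r y * (etaSign i * y i * y i)
        + 4 * p * r * etaPow ℓ (p - 1) (r - 1) y * (etaSign i * y i * ℓ i)
        + r * (r - 1) * etaPow ℓ p (r - 2) y * (etaSign i * ℓ i * ℓ i) := by
    rw [fderiv_fderiv_etaPow_single p r hy]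
    linear_combination 2 * p * etaPow ℓ (p - 1) r y * etaSign_mul_self i
  have hQ := etaPow_add_one_left (p - 2) r hy
  have hL := etaPow_add_one_right (p - 1) (r - 1) hy
  rw [show p - 2 + 1 = p - 1 by ring] at hQ
  rw [show r - 1 + 1 = r by ring] at hL
  rw [flatBox_eq_sum, Finset.sum_congr rfl fun i _ => hterm i]
  simp only [Finset.sum_add_distrib, ← Finset.mul_sum, ← eta_eq_sum, Finset.sum_const,
    Finset.card_univ, Fintype.card_fin, nsmul_eq_mul]
  linear_combination -4 * p * (p - 1) * hQ - 4 * p * r * hL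

end etaPow

lemma _root_.Filter.EventuallyEq.flatBox_eq {f g : (Fin 5 → ℝ) → ℝ} {x : Fin 5 → ℝ}
    (h : f =ᶠ[nhds x] g) : flatBox f x = flatBox g x := by
  have hpartial (v : Fin 5 → ℝ) :
      (fun y => fderiv ℝ f y v) =ᶠ[nhds x] fun y => fderiv ℝ g y v :=
    (h.fderiv (𝕜 := ℝ)).mono fun y hy => by simp only [hy]
  simp only [flatBox_eq_sum, (hpartial _).fderiv_eq]

lemma eta_normalize_rpow {ℓ y : Fin 5 → ℝ} (hy : y ∈ posRegion ℓ) (w : ℝ) :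
    eta ((Real.sqrt (eta y y))⁻¹ • y) ℓ ^ (-w) = etaPow ℓ (w / 2) (-w) y := by
  rw [eta_smul_left, Real.mul_rpow (by positivity) hy.2.le, Real.inv_rpow (Real.sqrt_nonneg _),
    Real.rpow_neg (Real.sqrt_nonneg _), inv_inv, Real.sqrt_eq_rpow, ← Real.rpow_mul hy.1.le,
    etaPow]
  ring_nf

lemma dsBox_eta_rpow_of_null {ℓ x : Fin 5 → ℝ} (hnull : eta ℓ ℓ = 0) (hx1 : eta x x = 1)
    (hxℓ : 0 < eta x ℓ) (w : ℝ) :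
    dsBox (fun y => eta y ℓ ^ (-w)) x = w * (3 - w) * eta x ℓ ^ (-w) := by
  have hx : x ∈ posRegion ℓ := ⟨hx1 ▸ one_pos, hxℓ⟩
  have hext : (fun y => eta ((Real.sqrt (eta y y))⁻¹ • y) ℓ ^ (-w)) =ᶠ[nhds x]
      etaPow ℓ (w / 2) (-w) :=
    Filter.eventually_of_mem ((isOpen_posRegion ℓ).mem_nhds hx) fun y hy =>
      eta_normalize_rpow hy w
  rw [dsBox, hext.flatBox_eq, flatBox_etaPow _ _ hx, hnull, etaPow, hx1, Real.one_rpow]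
  ring

lemma eta_eq (x y : Fin 5 → ℝ) :
    eta x y = -(x 0 * y 0) + x 1 * y 1 + x 2 * y 2 + x 3 * y 3 + x 4 * y 4 := by
  simp [eta_eq_sum, Fin.sum_univ_five, etaSign]

lemma exists_eta_self_eq_one_pos_of_null {ℓ : Fin 5 → ℝ} (hl0 : ℓ ≠ 0)
    (hnull : eta ℓ ℓ = 0) :
    ∃ x : Fin 5 → ℝ, eta x x = 1 ∧ 0 < eta x ℓ := by
  rw [eta_eq] at hnull
  have hℓ0 : ℓ 0 ≠ 0 := by
    intro h0
    have hsum : ∑ i, ℓ i ^ 2 = 0 := by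
      rw [Fin.sum_univ_five]
      linear_combination hnull + 2 * ℓ 0 * h0
    exact hl0 (funext fun i => pow_eq_zero_iff two_ne_zero |>.1 <|
      (Finset.sum_eq_zero_iff_of_nonneg fun j _ => sq_nonneg (ℓ j)).1 hsum i (Finset.mem_univ i))
  have ha : 0 < |ℓ 0| := abs_pos.mpr hℓ0
  have hsq : |ℓ 0| * |ℓ 0| = ℓ 0 * ℓ 0 := abs_mul_abs_self _
  -- the spatial part of `ℓ` over `|ℓ₀|`; nullity of `ℓ` makes it a unit vector
  -- with `η(x,ℓ) = |ℓ₀|`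
  refine ⟨fun i => if i = 0 then 0 else ℓ i / |ℓ 0|, ?_, ?_⟩
  · rw [eta_eq]
    simp only [Fin.reduceEq, reduceIte]
    field_simp
    linear_combination hnull - hsq
  · have hxℓ : eta (fun i => if i = 0 then 0 else ℓ i / |ℓ 0|) ℓ = |ℓ 0| := by
      rw [eta_eq]
      simp only [Fin.reduceEq, reduceIte]
      field_simp
      linear_combination hnull - hsq
    rwa [hxℓ]

lemma mul_sub_three_eq_neg_sq_iff {w m : ℝ} (hm : m ^ 2 ≤ 9 / 4) :
    w * (w - 3) = -m ^ 2 ↔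
      w = 3 / 2 + Real.sqrt (9 / 4 - m ^ 2) ∨ w = 3 / 2 - Real.sqrt (9 / 4 - m ^ 2) := by
  have hs := Real.sq_sqrt (show 0 ≤ 9 / 4 - m ^ 2 by linarith)
  have hfac : w * (w - 3) + m ^ 2 = (w - (3 / 2 + Real.sqrt (9 / 4 - m ^ 2)))
      * (w - (3 / 2 - Real.sqrt (9 / 4 - m ^ 2))) := by
    linear_combination hs
  rw [eq_neg_iff_add_eq_zero, hfac, mul_eq_zero, sub_eq_zero, sub_eq_zero]

/-- For a nonzero null vector `ℓ`, the field `φ(x) = (η(x,ℓ))^{-w}` on the region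
`η(x,ℓ) > 0` of the de Sitter hyperboloid satisfies `(□ - m²)φ = 0` iff
`w(w-3) = -m²`, i.e. iff `w = 3/2 ± √(9/4 - m²)`. -/
theorem stmt_7 (ℓ : Fin 5 → ℝ) (hl0 : ℓ ≠ 0) (hnull : eta ℓ ℓ = 0)
    (w m : ℝ) (hm : m ^ 2 ≤ 9 / 4) :
    ((∀ x : Fin 5 → ℝ, eta x x = 1 → 0 < eta x ℓ →
        dsBox (fun y => eta y ℓ ^ (-w)) x - m ^ 2 * eta x ℓ ^ (-w) = 0)
      ↔ w * (w - 3) = -m ^ 2) ∧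
    (w * (w - 3) = -m ^ 2 ↔
      (w = 3 / 2 + Real.sqrt (9 / 4 - m ^ 2) ∨
       w = 3 / 2 - Real.sqrt (9 / 4 - m ^ 2))) := by
  refine ⟨⟨fun h => ?_, fun h x hx1 hxℓ => ?_⟩, mul_sub_three_eq_neg_sq_iff hm⟩
  · obtain ⟨x, hx1, hxℓ⟩ := exists_eta_self_eq_one_pos_of_null hl0 hnull
    have hφ : eta x ℓ ^ (-w) ≠ 0 := (Real.rpow_pos_of_pos hxℓ _).ne'
    have hx := h x hx1 hxℓ
    rw [dsBox_eta_rpow_of_null hnull hx1 hxℓ, ← sub_mul] at hx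
    linear_combination -(mul_eq_zero.mp hx).resolve_right hφ
  · rw [dsBox_eta_rpow_of_null hnull hx1 hxℓ]
    linear_combination -eta x ℓ ^ (-w) * h

end Stmt7
end

section
/- Mehler kernel / thermal density matrix property: with ⟨q|e^{−βâ†â}|q'⟩ = e^{β/2}(2π sinh β)^{−1/2} exp(−[(q²+q'²)cosh β − 2qq']/(2 sinh β)), the family of kernels satisfies the semigroup property ∫_ℝ ⟨q|e^{−β₁â†â}|q''⟩⟨q''|e^{−β₂â†â}|q'⟩ dq'' = ⟨q|e^{−(β₁+β₂)â†â}|q'⟩ for all β₁, β₂ > 0. -/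
/-!
As a function of the intermediate variable `x`, the product of the kernels at `β₁` and `β₂` is a
Gaussian. Completing the square in `x` with the addition formulas for `sinh`, `cosh` and
`cosh² - sinh² = 1` leaves exactly the exponent of the kernel at `β₁ + β₂`, and the remaining
Gaussian integral `√(π / A)`, with `A = sinh (β₁ + β₂) / (2 sinh β₁ sinh β₂)`, merges the two
prefactors into the prefactor at `β₁ + β₂`.
-/

open MeasureTheory

namespace Stmt15

/-- The Mehler kernel `⟨q| e^{-β â†â} |q'⟩` of the quantum harmonic oscillator. -/
noncomputable def mehler (β q q' : ℝ) : ℝ :=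
  Real.exp (β / 2) * (Real.sqrt (2 * Real.pi * Real.sinh β))⁻¹ *
    Real.exp (-(((q ^ 2 + q' ^ 2) * Real.cosh β - 2 * q * q') / (2 * Real.sinh β)))

open Real

theorem integral_exp_neg_mul_sq_sub_add (a x₀ c : ℝ) :
    ∫ x : ℝ, exp (-a * (x - x₀) ^ 2 + c) = exp c * √(π / a) := by
  simp only [exp_add, integral_mul_const]
  rw [integral_sub_right_eq_self (fun x ↦ exp (-a * x ^ 2)), integral_gaussian, mul_comm]

noncomputable def mehlerPrefactor (β : ℝ) : ℝ :=
  exp (β / 2) * (√(2 * π * sinh β))⁻¹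

noncomputable def mehlerExponent (β q q' : ℝ) : ℝ :=
  -(((q ^ 2 + q' ^ 2) * cosh β - 2 * q * q') / (2 * sinh β))

theorem mehler_eq (β q q' : ℝ) :
    mehler β q q' = mehlerPrefactor β * exp (mehlerExponent β q q') := rfl

theorem mehlerExponent_add_mehlerExponent {β₁ β₂ : ℝ} (h₁ : sinh β₁ ≠ 0) (h₂ : sinh β₂ ≠ 0)
    (h₁₂ : sinh (β₁ + β₂) ≠ 0) (q x q' : ℝ) :
    mehlerExponent β₁ q x + mehlerExponent β₂ x q' =
      -(sinh (β₁ + β₂) / (2 * sinh β₁ * sinh β₂)) *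
          (x - (q * sinh β₂ + q' * sinh β₁) / sinh (β₁ + β₂)) ^ 2 +
        mehlerExponent (β₁ + β₂) q q' := by
  rw [sinh_add] at h₁₂
  simp only [mehlerExponent, sinh_add, cosh_add]
  field_simp
  linear_combination (-q ^ 2 * sinh β₂ ^ 2) * cosh_sq β₁ + (-q' ^ 2 * sinh β₁ ^ 2) * cosh_sq β₂

theorem mehlerPrefactor_mul_mehlerPrefactor {β₁ β₂ : ℝ} (h₁ : 0 < β₁) (h₂ : 0 < β₂) :
    mehlerPrefactor β₁ * mehlerPrefactor β₂ * √(π / (sinh (β₁ + β₂) / (2 * sinh β₁ * sinh β₂))) =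
      mehlerPrefactor (β₁ + β₂) := by
  have hs₁ : 0 < sinh β₁ := sinh_pos_iff.mpr h₁
  have hs₂ : 0 < sinh β₂ := sinh_pos_iff.mpr h₂
  have hs₁₂ : 0 < sinh (β₁ + β₂) := sinh_pos_iff.mpr (add_pos h₁ h₂)
  have hsqrt : √(π / (sinh (β₁ + β₂) / (2 * sinh β₁ * sinh β₂))) =
      √(2 * π * sinh β₁) * √(2 * π * sinh β₂) / √(2 * π * sinh (β₁ + β₂)) := by
    rw [← sqrt_mul (by positivity), ← sqrt_div' _ (by positivity)]
    congr 1
    field_simp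
  have : 0 < √(2 * π * sinh β₁) := by positivity
  have : 0 < √(2 * π * sinh β₂) := by positivity
  simp only [mehlerPrefactor, hsqrt, add_div, exp_add]
  field_simp

/-- The Mehler kernels form a convolution semigroup:
`∫_ℝ ⟨q|e^{-β₁â†â}|q''⟩ ⟨q''|e^{-β₂â†â}|q'⟩ dq'' = ⟨q|e^{-(β₁+β₂)â†â}|q'⟩`
for all `β₁, β₂ > 0`. -/
theorem stmt_15 (β₁ β₂ : ℝ) (h1 : 0 < β₁) (h2 : 0 < β₂) (q q' : ℝ) :
    (∫ q'' : ℝ, mehler β₁ q q'' * mehler β₂ q'' q') = mehler (β₁ + β₂) q q' := by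
  have hs₁ : sinh β₁ ≠ 0 := (sinh_pos_iff.mpr h1).ne'
  have hs₂ : sinh β₂ ≠ 0 := (sinh_pos_iff.mpr h2).ne'
  have hs₁₂ : sinh (β₁ + β₂) ≠ 0 := (sinh_pos_iff.mpr (add_pos h1 h2)).ne'
  simp only [mehler_eq, mul_mul_mul_comm _ (exp _), ← exp_add,
    mehlerExponent_add_mehlerExponent hs₁ hs₂ hs₁₂, integral_const_mul,
    integral_exp_neg_mul_sq_sub_add, ← mehlerPrefactor_mul_mehlerPrefactor h1 h2]
  ring

end Stmt15
end
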